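/- The function h₁(t) = (log(1+t))^2 / log(1+t^2) is strictly increasing on the interval (1,∞). -/

import Mathlib

/-!
By the quotient rule, `h₁' > 0` on `(1, ∞)` amounts to
`t (1 + t) log (1 + t) < (1 + t²) log (1 + t²)`. With `φ x = x log x`, which is strictly
convex and vanishes at `1`, this says that the secant slope `φ (1 + s) / s` of `φ` from `1`
is smaller at `s = t` than at `s = t²`.
-/

open Real Set

theorem strictMonoOn_one_add_mul_log_one_add_div :
    StrictMonoOn (fun s : ℝ => (1 + s) * log (1 + s) / s) (Ioi 0) := by
  rintro s (hs : 0 < s) u (hu : 0 < u) hsu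
  have hslope := strictConvexOn_mul_log.secant_strict_mono (a := 1) (x := 1 + s) (y := 1 + u)
    (by norm_num) (by rw [mem_Ici]; linarith) (by rw [mem_Ici]; linarith)
    (by linarith) (by linarith) (by linarith)
  simpa using hslope

theorem mul_one_add_mul_log_one_add_lt {t : ℝ} (ht : 1 < t) :
    t * (1 + t) * log (1 + t) < (1 + t ^ 2) * log (1 + t ^ 2) := by
  have ht0 : 0 < t := by linarith
  have hslope := strictMonoOn_one_add_mul_log_one_add_div ht0 (by positivity : 0 < t ^ 2)
    (by nlinarith)
  rw [div_lt_div_iff₀ ht0 (by positivity)] at hslope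
  nlinarith

theorem hasDerivAt_log_one_add_sq_div_log_one_add_sq {t : ℝ} (ht : 0 < t) :
    HasDerivAt (fun t : ℝ => log (1 + t) ^ 2 / log (1 + t ^ 2))
      (2 * log (1 + t) * ((1 + t ^ 2) * log (1 + t ^ 2) - t * (1 + t) * log (1 + t)) /
        ((1 + t) * (1 + t ^ 2) * log (1 + t ^ 2) ^ 2)) t := by
  have h1 : 1 + t ≠ 0 := by positivity
  have h2 : 1 + t ^ 2 ≠ 0 := by positivity
  have hL2 : log (1 + t ^ 2) ≠ 0 := (log_pos (by nlinarith)).ne'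
  have hnum : HasDerivAt (fun t : ℝ => log (1 + t) ^ 2) (2 * log (1 + t) ^ 1 * (1 / (1 + t))) t :=
    (((hasDerivAt_id t).const_add 1).log h1).pow 2
  have hden : HasDerivAt (fun t : ℝ => log (1 + t ^ 2)) (2 * t ^ 1 / (1 + t ^ 2)) t :=
    (((hasDerivAt_pow 2 t).const_add 1).congr_deriv (by norm_num)).log h2
  refine (hnum.div hden hL2).congr_deriv ?_
  field_simp

theorem h1_strictMonoOn :
    StrictMonoOn (fun t : ℝ => (Real.log (1 + t)) ^ 2 / Real.log (1 + t ^ 2))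
      (Set.Ioi 1) := by
  have hderiv : ∀ t ∈ Ioi (1 : ℝ), HasDerivAt _ _ t := fun t ht =>
    hasDerivAt_log_one_add_sq_div_log_one_add_sq (one_pos.trans ht)
  refine strictMonoOn_of_hasDerivWithinAt_pos (convex_Ioi 1)
    (fun t ht => (hderiv t ht).continuousAt.continuousWithinAt)
    (fun t ht => (hderiv t (interior_subset ht)).hasDerivWithinAt) fun t ht => ?_
  rw [interior_Ioi, mem_Ioi] at ht
  have h1 : 0 < 1 + t := by linarith
  have hL1 : 0 < log (1 + t) := log_pos (by linarith)
  have hL2 : 0 < log (1 + t ^ 2) := log_pos (by nlinarith)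
  have hkey := sub_pos.mpr (mul_one_add_mul_log_one_add_lt ht)
  positivity
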